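/- Leapfrog evolution of the cross-ratio coordinate a (Theorem 3.8, second part): let R be a division ring and u, w : ℤ → R² sequences of column vectors and a, b : ℤ → R scalars such that for every i: u_i = w_{i+1} + w_i·a_i and u_{i+1} = w_{i+1} − w_i·b_i (componentwise, scalars acting on the right). Assume for every i that a_i ≠ 0 and a_i + b_i ≠ 0, and that every element inverted in the cross-ratio formulas below is nonzero. Then for every i: κ(u_{i+1}, u_{i−1}, u_i, w_i) = (a_{i−1} + b_{i−1})⁻¹ · a_{i−1} · (a_i + b_i). -/
import Mathlib


/-- The non-commutative cross-ratio `κ(x, y, z, t)` of four column vectors in `R²`: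
`κ(x,y,z,t) = (z₁ − y₁y₂⁻¹z₂)⁻¹ (t₁ − y₁y₂⁻¹t₂) (t₁ − x₁x₂⁻¹t₂)⁻¹ (z₁ − x₁x₂⁻¹z₂)`. -/
noncomputable def ncr {R : Type*} [DivisionRing R] (x y z t : Fin 2 → R) : R :=
  (z 0 - y 0 * (y 1)⁻¹ * z 1)⁻¹ * (t 0 - y 0 * (y 1)⁻¹ * t 1) *
    (t 0 - x 0 * (x 1)⁻¹ * t 1)⁻¹ * (z 0 - x 0 * (x 1)⁻¹ * z 1)

/-- `κ(x, y, z, t)` is said to be defined when `x₂`, `y₂`, `z₁ − y₁y₂⁻¹z₂` and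
`t₁ − x₁x₂⁻¹t₂` are all nonzero. -/
def ncrDefined {R : Type*} [DivisionRing R] (x y z t : Fin 2 → R) : Prop :=
  x 1 ≠ 0 ∧ y 1 ≠ 0 ∧ z 0 - y 0 * (y 1)⁻¹ * z 1 ≠ 0 ∧ t 0 - x 0 * (x 1)⁻¹ * t 1 ≠ 0

/-- Leapfrog evolution of the cross-ratio coordinate `a`:
`κ(u_{i+1}, u_{i−1}, u_i, w_i) = (a_{i−1} + b_{i−1})⁻¹ · a_{i−1} · (a_i + b_i)`. -/
theorem stmt_11 {R : Type*} [DivisionRing R]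
    (u w : ℤ → Fin 2 → R) (a b : ℤ → R)
    (h1 : ∀ (i : ℤ) (r : Fin 2), u i r = w (i + 1) r + w i r * a i)
    (h2 : ∀ (i : ℤ) (r : Fin 2), u (i + 1) r = w (i + 1) r - w i r * b i)
    (ha : ∀ i : ℤ, a i ≠ 0)
    (hab : ∀ i : ℤ, a i + b i ≠ 0)
    (hdef : ∀ i : ℤ, ncrDefined (u (i + 1)) (u (i - 1)) (u i) (w i)) :
    ∀ i : ℤ,
      ncr (u (i + 1)) (u (i - 1)) (u i) (w i)
        = (a (i - 1) + b (i - 1))⁻¹ * a (i - 1) * (a i + b i) := by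
  intro i
  obtain ⟨hx1, hy1, hA, hC⟩ := hdef i
  have hi : i - 1 + 1 = i := by ring
  have e1 : ∀ r, u (i-1) r = w i r + w (i-1) r * a (i-1) := by
    intro r; have := h1 (i-1) r; rwa [hi] at this
  have e2 : ∀ r, u i r = w i r - w (i-1) r * b (i-1) := by
    intro r; have := h2 (i-1) r; rwa [hi] at this
  have e3 := h1 i
  have e4 := h2 i
  simp only [ncr]
  set μ := u (i-1) 0 * (u (i-1) 1)⁻¹ with hμdef
  set ν := u (i+1) 0 * (u (i+1) 1)⁻¹ with hνdef
  have hμy : μ * u (i-1) 1 = u (i-1) 0 := by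
    rw [hμdef, mul_assoc, inv_mul_cancel₀ hy1, mul_one]
  have hνx : ν * u (i+1) 1 = u (i+1) 0 := by
    rw [hνdef, mul_assoc, inv_mul_cancel₀ hx1, mul_one]
  set B := w i 0 - μ * w i 1 with hB
  set A := u i 0 - μ * u i 1 with hAd
  set C := w i 0 - ν * w i 1 with hCd
  set D := u i 0 - ν * u i 1 with hDd
  set P := w (i-1) 0 - μ * w (i-1) 1 with hP
  -- Step 1 : B + P * a(i-1) = 0
  have hBP : B + P * a (i-1) = 0 := by
    have h' : B + P * a (i-1)
        = (w i 0 + w (i-1) 0 * a (i-1)) - μ * (w i 1 + w (i-1) 1 * a (i-1)) := by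
      rw [hB, hP]; noncomm_ring
    rw [h', ← e1 0, ← e1 1, hμy, sub_self]
  have hPa : P * a (i-1) = -B := eq_neg_of_add_eq_zero_right hBP
  have hPval : P = -B * (a (i-1))⁻¹ := by
    calc P = P * a (i-1) * (a (i-1))⁻¹ := by
            rw [mul_assoc, mul_inv_cancel₀ (ha _), mul_one]
      _ = -B * (a (i-1))⁻¹ := by rw [hPa]
  have hABP : A = B - P * b (i-1) := by
    rw [hAd, e2 0, e2 1, hB, hP]; noncomm_ring
  have hA2 : A = B * (a (i-1))⁻¹ * (a (i-1) + b (i-1)) := by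
    have l1 : B - (-B * (a (i-1))⁻¹) * b (i-1) = B + B * (a (i-1))⁻¹ * b (i-1) := by
      noncomm_ring
    have l2 : B * (a (i-1))⁻¹ * (a (i-1) + b (i-1))
        = B + B * (a (i-1))⁻¹ * b (i-1) := by
      rw [mul_add, mul_assoc B, inv_mul_cancel₀ (ha _), mul_one]
    rw [hABP, hPval, l1, l2]
  have hBA : B = A * (a (i-1) + b (i-1))⁻¹ * a (i-1) := by
    rw [hA2, mul_assoc (B * (a (i-1))⁻¹), mul_inv_cancel₀ (hab _), mul_one,
      mul_assoc, inv_mul_cancel₀ (ha _), mul_one]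
  -- Step 2 : D = C * (a i + b i)
  have hCR : w (i+1) 0 - ν * w (i+1) 1 = C * b i := by
    have h' : (w (i+1) 0 - ν * w (i+1) 1) - C * b i = u (i+1) 0 - ν * u (i+1) 1 := by
      rw [e4 0, e4 1, hCd]; noncomm_ring
    have h'' : u (i+1) 0 - ν * u (i+1) 1 = 0 := by rw [hνx, sub_self]
    rw [h''] at h'
    exact sub_eq_zero.mp h'
  have hDC : D = C * (a i + b i) := by
    have h' : D = (w (i+1) 0 - ν * w (i+1) 1) + C * a i := by
      rw [hDd, e3 0, e3 1, hCd]; noncomm_ring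
    rw [h', hCR]; noncomm_ring
  -- Conclusion
  rw [hBA, hDC]
  rw [mul_assoc A, ← mul_assoc A⁻¹ A, inv_mul_cancel₀ hA, one_mul]
  rw [mul_assoc _ C⁻¹, ← mul_assoc C⁻¹ C, inv_mul_cancel₀ hC, one_mul]
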